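/- (Classification of cycle closers for permutations.) Let σ be a permutation of [n], and set F = {i : σ(i) > i}, G = {i : σ(i) < i}, H = {i : σ(i) = i}. Define the FZ order on [n]: first the elements of H in increasing order, then the elements of G in increasing order, then the elements of F in decreasing order. For u ∈ [n] ∖ H, let P(u) be the set of elements strictly preceding u in the FZ order. Then the directed graph on [n] with edge set {(v, σ(v)) : v ∈ P(u)} contains a directed path from σ(u) to u (equivalently, inserting the edge u → σ(u) closes a directed cycle) if and only if u is the smallest element of its cycle under σ; in that case u is a cycle valley that is the minimum of its cycle. -/
import Mathlib


open scoped Classical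
open Finset

noncomputable section

namespace CFPaper

/-! ### Lattice-path machinery -/

inductive MStep | up | down | level
deriving DecidableEq

/-- all lists of Motzkin steps of length `n`. -/
def mlists : ℕ → Finset (List MStep)
  | 0 => {[]}
  | n + 1 =>
      (mlists n).image (MStep.up :: ·) ∪ (mlists n).image (MStep.down :: ·) ∪
        (mlists n).image (MStep.level :: ·)

/-- `MValid h p` : starting from height `h`, the path `p` stays at heights `≥ 0`
(automatic, heights being natural numbers) and ends at height `0`. -/
inductive MValid : ℕ → List MStep → Prop
  | nil : MValid 0 []
  | up {h : ℕ} {p : List MStep} : MValid (h + 1) p → MValid h (MStep.up :: p)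
  | down {h : ℕ} {p : List MStep} : MValid h p → MValid (h + 1) (MStep.down :: p)
  | level {h : ℕ} {p : List MStep} : MValid h p → MValid h (MStep.level :: p)

inductive DStep | up | down
deriving DecidableEq

/-- all lists of Dyck steps of length `n`. -/
def dlists : ℕ → Finset (List DStep)
  | 0 => {[]}
  | n + 1 => (dlists n).image (DStep.up :: ·) ∪ (dlists n).image (DStep.down :: ·)

inductive DValid : ℕ → List DStep → Prop
  | nil : DValid 0 []
  | up {h : ℕ} {p : List DStep} : DValid (h + 1) p → DValid h (DStep.up :: p)
  | down {h : ℕ} {p : List DStep} : DValid h p → DValid (h + 1) (DStep.down :: p)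

inductive SStep | up | down | lvl
deriving DecidableEq

/-- all lists of Schröder steps of total width `m` (a long level step `lvl` has width 2). -/
def slists : ℕ → Finset (List SStep)
  | 0 => {[]}
  | 1 => (slists 0).image (SStep.up :: ·) ∪ (slists 0).image (SStep.down :: ·)
  | m + 2 =>
      (slists (m + 1)).image (SStep.up :: ·) ∪ (slists (m + 1)).image (SStep.down :: ·) ∪
        (slists m).image (SStep.lvl :: ·)

inductive SValid : ℕ → List SStep → Prop
  | nil : SValid 0 []
  | up {h : ℕ} {p : List SStep} : SValid (h + 1) p → SValid h (SStep.up :: p)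
  | down {h : ℕ} {p : List SStep} : SValid h p → SValid (h + 1) (SStep.down :: p)
  | lvl {h : ℕ} {p : List SStep} : SValid h p → SValid h (SStep.lvl :: p)

variable {R : Type*} [CommRing R]

/-- weight of a Motzkin path, read off from the current height: each rise has weight 1,
each fall starting at height `h` has weight `β h`, each level step at height `h` has
weight `γ h`. -/
def mweight (β γ : ℕ → R) : ℕ → List MStep → R
  | _, [] => 1
  | h, MStep.up :: p => mweight β γ (h + 1) p
  | h, MStep.down :: p => β h * mweight β γ (h - 1) p
  | h, MStep.level :: p => γ h * mweight β γ h p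

/-- sum over all Motzkin paths of length `n` of the product of the step weights. -/
def motzkinSum (β γ : ℕ → R) (n : ℕ) : R :=
  ∑ p ∈ (mlists n).filter (MValid 0), mweight β γ 0 p

def dweight (α : ℕ → R) : ℕ → List DStep → R
  | _, [] => 1
  | h, DStep.up :: p => dweight α (h + 1) p
  | h, DStep.down :: p => α h * dweight α (h - 1) p

/-- sum over all Dyck paths of length `2*n` of the product over falls of `α h`,
`h` being the starting height of the fall (rises have weight 1). -/
def dyckSum (α : ℕ → R) (n : ℕ) : R :=
  ∑ p ∈ (dlists (2 * n)).filter (DValid 0), dweight α 0 p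

def sweight (α δ : ℕ → R) : ℕ → List SStep → R
  | _, [] => 1
  | h, SStep.up :: p => sweight α δ (h + 1) p
  | h, SStep.down :: p => α h * sweight α δ (h - 1) p
  | h, SStep.lvl :: p => δ h * sweight α δ h p

/-- sum over all Schröder paths of length `2*n` of the product of step weights:
rises have weight 1, a fall starting at height `h` has weight `α h`, a long level step
at height `h` has weight `δ h`. -/
def schroederSum (α δ : ℕ → R) (n : ℕ) : R :=
  ∑ p ∈ (slists (2 * n)).filter (SValid 0), sweight α δ 0 p

/-- `(p,q)`-integer `[m]_{p,q} = Σ_{i=0}^{m-1} p^i q^(m-1-i)`. -/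
def pqInt (p q : R) (m : ℕ) : R := ∑ i ∈ Finset.range m, p ^ i * q ^ (m - 1 - i)

/-! ### Permutation statistics -/

variable {n : ℕ}

/-- number of indices satisfying `P`. -/
def cnt (P : Fin n → Prop) : ℕ := (Finset.univ.filter P).card

def IsCpeak (σ : Equiv.Perm (Fin n)) (i : Fin n) : Prop := σ.symm i < i ∧ σ i < i
def IsCval (σ : Equiv.Perm (Fin n)) (i : Fin n) : Prop := i < σ.symm i ∧ i < σ i
def IsCdrise (σ : Equiv.Perm (Fin n)) (i : Fin n) : Prop := σ.symm i < i ∧ i < σ i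
def IsCdfall (σ : Equiv.Perm (Fin n)) (i : Fin n) : Prop := i < σ.symm i ∧ σ i < i
def IsFixPt (σ : Equiv.Perm (Fin n)) (i : Fin n) : Prop := σ i = i

def IsRec (σ : Equiv.Perm (Fin n)) (i : Fin n) : Prop := ∀ j, j < i → σ j < σ i
def IsArec (σ : Equiv.Perm (Fin n)) (i : Fin n) : Prop := ∀ j, i < j → σ i < σ j
def IsErec (σ : Equiv.Perm (Fin n)) (i : Fin n) : Prop := IsRec σ i ∧ ¬ IsArec σ i
def IsEarec (σ : Equiv.Perm (Fin n)) (i : Fin n) : Prop := IsArec σ i ∧ ¬ IsRec σ i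
def IsRar (σ : Equiv.Perm (Fin n)) (i : Fin n) : Prop := IsRec σ i ∧ IsArec σ i
def IsNrar (σ : Equiv.Perm (Fin n)) (i : Fin n) : Prop := ¬ IsRec σ i ∧ ¬ IsArec σ i

/-- `i` is a record value iff `σ⁻¹ i` is a record. -/
def IsRecV (σ : Equiv.Perm (Fin n)) (i : Fin n) : Prop := IsRec σ (σ.symm i)
def IsArecV (σ : Equiv.Perm (Fin n)) (i : Fin n) : Prop := IsArec σ (σ.symm i)
def IsErecV (σ : Equiv.Perm (Fin n)) (i : Fin n) : Prop := IsRecV σ i ∧ ¬ IsArecV σ i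
def IsEarecV (σ : Equiv.Perm (Fin n)) (i : Fin n) : Prop := IsArecV σ i ∧ ¬ IsRecV σ i
def IsNrarV (σ : Equiv.Perm (Fin n)) (i : Fin n) : Prop := ¬ IsRecV σ i ∧ ¬ IsArecV σ i

/-- the index `i : Fin n` represents the one-based index `i+1`; it is "even" if `i+1` is even. -/
def IsEvenIdx (i : Fin n) : Prop := Even ((i : ℕ) + 1)
def IsOddIdx (i : Fin n) : Prop := Odd ((i : ℕ) + 1)

/-- `i` is the smallest element of its cycle. -/
def IsCycMin (σ : Equiv.Perm (Fin n)) (i : Fin n) : Prop := ∀ j, σ.SameCycle i j → i ≤ j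

/-- number of cycles (counting fixed points as cycles), i.e. number of cycle minima. -/
def cyc (σ : Equiv.Perm (Fin n)) : ℕ := cnt (IsCycMin σ)

def eareccpeak (σ : Equiv.Perm (Fin n)) : ℕ := cnt fun i => IsEarec σ i ∧ IsCpeak σ i
def eareccdfall (σ : Equiv.Perm (Fin n)) : ℕ := cnt fun i => IsEarec σ i ∧ IsCdfall σ i
def ereccval (σ : Equiv.Perm (Fin n)) : ℕ := cnt fun i => IsErec σ i ∧ IsCval σ i
def ereccdrise (σ : Equiv.Perm (Fin n)) : ℕ := cnt fun i => IsErec σ i ∧ IsCdrise σ i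
def nrcpeak (σ : Equiv.Perm (Fin n)) : ℕ := cnt fun i => IsNrar σ i ∧ IsCpeak σ i
def nrcdfall (σ : Equiv.Perm (Fin n)) : ℕ := cnt fun i => IsNrar σ i ∧ IsCdfall σ i
def nrcval (σ : Equiv.Perm (Fin n)) : ℕ := cnt fun i => IsNrar σ i ∧ IsCval σ i
def nrcdrise (σ : Equiv.Perm (Fin n)) : ℕ := cnt fun i => IsNrar σ i ∧ IsCdrise σ i
def cval (σ : Equiv.Perm (Fin n)) : ℕ := cnt (IsCval σ)

def ereccpeak' (σ : Equiv.Perm (Fin n)) : ℕ := cnt fun i => IsErecV σ i ∧ IsCpeak σ i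
def eareccdfall' (σ : Equiv.Perm (Fin n)) : ℕ := cnt fun i => IsEarecV σ i ∧ IsCdfall σ i
def eareccval' (σ : Equiv.Perm (Fin n)) : ℕ := cnt fun i => IsEarecV σ i ∧ IsCval σ i
def ereccdrise' (σ : Equiv.Perm (Fin n)) : ℕ := cnt fun i => IsErecV σ i ∧ IsCdrise σ i
def nrcpeak' (σ : Equiv.Perm (Fin n)) : ℕ := cnt fun i => IsNrarV σ i ∧ IsCpeak σ i
def nrcdfall' (σ : Equiv.Perm (Fin n)) : ℕ := cnt fun i => IsNrarV σ i ∧ IsCdfall σ i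
def nrcval' (σ : Equiv.Perm (Fin n)) : ℕ := cnt fun i => IsNrarV σ i ∧ IsCval σ i
def nrcdrise' (σ : Equiv.Perm (Fin n)) : ℕ := cnt fun i => IsNrarV σ i ∧ IsCdrise σ i

def evennrfix (σ : Equiv.Perm (Fin n)) : ℕ :=
  cnt fun i => IsFixPt σ i ∧ IsEvenIdx i ∧ ¬ IsRar σ i
def oddnrfix (σ : Equiv.Perm (Fin n)) : ℕ :=
  cnt fun i => IsFixPt σ i ∧ IsOddIdx i ∧ ¬ IsRar σ i
def evenrar (σ : Equiv.Perm (Fin n)) : ℕ :=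
  cnt fun i => IsFixPt σ i ∧ IsEvenIdx i ∧ IsRar σ i
def oddrar (σ : Equiv.Perm (Fin n)) : ℕ :=
  cnt fun i => IsFixPt σ i ∧ IsOddIdx i ∧ IsRar σ i

/-- number of cycle valleys that are the minimum of their cycle. -/
def minval (σ : Equiv.Perm (Fin n)) : ℕ := cnt fun i => IsCval σ i ∧ IsCycMin σ i
/-- number of cycle valleys that are not the minimum of their cycle. -/
def nminval (σ : Equiv.Perm (Fin n)) : ℕ := cnt fun i => IsCval σ i ∧ ¬ IsCycMin σ i

/-- pseudo-nesting number of the index `i`. -/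
def psnest (σ : Equiv.Perm (Fin n)) (i : Fin n) : ℕ := cnt fun j => j < i ∧ i < σ j

def fixSet (σ : Equiv.Perm (Fin n)) : Finset (Fin n) := Finset.univ.filter (IsFixPt σ)

def psnestTot (σ : Equiv.Perm (Fin n)) : ℕ := ∑ i ∈ fixSet σ, psnest σ i
def epsnest (σ : Equiv.Perm (Fin n)) : ℕ :=
  ∑ i ∈ Finset.univ.filter (fun i => IsFixPt σ i ∧ IsEvenIdx i), psnest σ i
def opsnest (σ : Equiv.Perm (Fin n)) : ℕ :=
  ∑ i ∈ Finset.univ.filter (fun i => IsFixPt σ i ∧ IsOddIdx i), psnest σ i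

def ucross (σ : Equiv.Perm (Fin n)) (j : Fin n) : ℕ :=
  cnt fun i => i < j ∧ j < σ i ∧ σ i < σ j
def unest (σ : Equiv.Perm (Fin n)) (j : Fin n) : ℕ :=
  cnt fun i => i < j ∧ j < σ j ∧ σ j < σ i
def lcross (σ : Equiv.Perm (Fin n)) (k : Fin n) : ℕ :=
  cnt fun l => k < l ∧ σ k < σ l ∧ σ l < k
def lnest (σ : Equiv.Perm (Fin n)) (k : Fin n) : ℕ :=
  cnt fun l => k < l ∧ σ l < σ k ∧ σ k < k

def ucross' (σ : Equiv.Perm (Fin n)) (k : Fin n) : ℕ :=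
  cnt fun j => σ.symm k < j ∧ j < k ∧ k < σ j
def unest' (σ : Equiv.Perm (Fin n)) (k : Fin n) : ℕ :=
  cnt fun i => i < σ.symm k ∧ σ.symm k < k ∧ k < σ i
def lcross' (σ : Equiv.Perm (Fin n)) (j : Fin n) : ℕ :=
  cnt fun k => σ k < j ∧ j < k ∧ k < σ.symm j
def lnest' (σ : Equiv.Perm (Fin n)) (j : Fin n) : ℕ :=
  cnt fun l => σ l < j ∧ j < σ.symm j ∧ σ.symm j < l

def ucrosscval (σ : Equiv.Perm (Fin n)) : ℕ := ∑ i ∈ Finset.univ.filter (IsCval σ), ucross σ i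
def unestcval (σ : Equiv.Perm (Fin n)) : ℕ := ∑ i ∈ Finset.univ.filter (IsCval σ), unest σ i
def ucrosscdrise (σ : Equiv.Perm (Fin n)) : ℕ := ∑ i ∈ Finset.univ.filter (IsCdrise σ), ucross σ i
def unestcdrise (σ : Equiv.Perm (Fin n)) : ℕ := ∑ i ∈ Finset.univ.filter (IsCdrise σ), unest σ i
def lcrosscpeak (σ : Equiv.Perm (Fin n)) : ℕ := ∑ i ∈ Finset.univ.filter (IsCpeak σ), lcross σ i
def lnestcpeak (σ : Equiv.Perm (Fin n)) : ℕ := ∑ i ∈ Finset.univ.filter (IsCpeak σ), lnest σ i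
def lcrosscdfall (σ : Equiv.Perm (Fin n)) : ℕ := ∑ i ∈ Finset.univ.filter (IsCdfall σ), lcross σ i
def lnestcdfall (σ : Equiv.Perm (Fin n)) : ℕ := ∑ i ∈ Finset.univ.filter (IsCdfall σ), lnest σ i

def ucrosscpeak' (σ : Equiv.Perm (Fin n)) : ℕ := ∑ i ∈ Finset.univ.filter (IsCpeak σ), ucross' σ i
def unestcpeak' (σ : Equiv.Perm (Fin n)) : ℕ := ∑ i ∈ Finset.univ.filter (IsCpeak σ), unest' σ i
def lcrosscval' (σ : Equiv.Perm (Fin n)) : ℕ := ∑ i ∈ Finset.univ.filter (IsCval σ), lcross' σ i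
def lnestcval' (σ : Equiv.Perm (Fin n)) : ℕ := ∑ i ∈ Finset.univ.filter (IsCval σ), lnest' σ i
def lcrosscdfall' (σ : Equiv.Perm (Fin n)) : ℕ := ∑ i ∈ Finset.univ.filter (IsCdfall σ), lcross' σ i
def lnestcdfall' (σ : Equiv.Perm (Fin n)) : ℕ := ∑ i ∈ Finset.univ.filter (IsCdfall σ), lnest' σ i
def ucrosscdrise' (σ : Equiv.Perm (Fin n)) : ℕ := ∑ i ∈ Finset.univ.filter (IsCdrise σ), ucross' σ i
def unestcdrise' (σ : Equiv.Perm (Fin n)) : ℕ := ∑ i ∈ Finset.univ.filter (IsCdrise σ), unest' σ i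

/-- D-permutation: `2k-1 ≤ σ(2k-1)` and `2k ≥ σ(2k)` in one-based indexing. -/
def IsDPerm (σ : Equiv.Perm (Fin n)) : Prop :=
  ∀ i : Fin n, (IsOddIdx i → i ≤ σ i) ∧ (IsEvenIdx i → σ i ≤ i)

/-- D-o-semiderangement: a D-permutation with no odd fixed points. -/
def IsDoSemi (σ : Equiv.Perm (Fin n)) : Prop :=
  IsDPerm σ ∧ ∀ i, IsFixPt σ i → IsEvenIdx i

def lema (σ : Equiv.Perm (Fin n)) : ℕ := cnt fun i => IsRec σ i ∧ IsEvenIdx (σ i)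
def romi (σ : Equiv.Perm (Fin n)) : ℕ := cnt fun i => IsArec σ i ∧ IsOddIdx (σ i)
def remi (σ : Equiv.Perm (Fin n)) : ℕ := cnt fun i => IsArec σ i ∧ IsEvenIdx (σ i)
def fixCnt (σ : Equiv.Perm (Fin n)) : ℕ := cnt (IsFixPt σ)
def comi (σ : Equiv.Perm (Fin n)) : ℕ := cnt fun i => IsOddIdx i ∧ IsCycMin σ i
def cemi (σ : Equiv.Perm (Fin n)) : ℕ := cnt fun i => IsEvenIdx i ∧ IsCycMin σ i

/-- the edge relation of the directed graph on `Fin n` with an edge `u → σ u`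
for every `u ∈ S`. -/
def edgeOf (σ : Equiv.Perm (Fin n)) (S : Set (Fin n)) (u v : Fin n) : Prop :=
  u ∈ S ∧ v = σ u

/-! ### auxiliary lemmas for statement15 -/

private lemma aux_pathImp {n : ℕ} (σ : Equiv.Perm (Fin n)) {S : Set (Fin n)} {a b : Fin n}
    (h : Relation.ReflTransGen (edgeOf σ S) a b) :
    ∃ k : ℕ, (σ ^ k) a = b ∧ ∀ j < k, (σ ^ j) a ∈ S := by
  induction h with
  | refl => exact ⟨0, rfl, fun j hj => absurd hj (Nat.not_lt_zero j)⟩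
  | tail hab hbc ih =>
    obtain ⟨k, hk, hS⟩ := ih
    refine ⟨k + 1, ?_, ?_⟩
    · rw [pow_succ', Equiv.Perm.mul_apply, hk, hbc.2]
    · intro j hj
      rcases Nat.lt_succ_iff_lt_or_eq.1 hj with h' | rfl
      · exact hS j h'
      · rw [hk]; exact hbc.1

private lemma aux_impPath {n : ℕ} (σ : Equiv.Perm (Fin n)) {S : Set (Fin n)} {a : Fin n} (k : ℕ)
    (h : ∀ j < k, (σ ^ j) a ∈ S) :
    Relation.ReflTransGen (edgeOf σ S) a ((σ ^ k) a) := by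
  induction k with
  | zero => exact Relation.ReflTransGen.refl
  | succ k ih =>
    refine Relation.ReflTransGen.tail (ih fun j hj => h j (hj.trans (Nat.lt_succ_self k))) ?_
    exact ⟨h k (Nat.lt_succ_self k), by rw [pow_succ', Equiv.Perm.mul_apply]⟩

private lemma aux_periodic {n : ℕ} (σ : Equiv.Perm (Fin n)) {u : Fin n} {p : ℕ}
    (hp : (σ ^ p) u = u) (t : ℕ) : (σ ^ t) u = (σ ^ (t % p)) u := by
  conv_lhs => rw [← Nat.div_add_mod t p]
  rw [add_comm, pow_add, Equiv.Perm.mul_apply]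
  congr 1
  induction (t / p) with
  | zero => simp
  | succ q ih => rw [Nat.mul_succ, pow_add, Equiv.Perm.mul_apply, hp, ih]

private lemma aux_closeIff {n : ℕ} (σ : Equiv.Perm (Fin n)) (u : Fin n) (S : Set (Fin n)) :
    Relation.ReflTransGen (edgeOf σ S) (σ u) u ↔
      ∀ w, σ.SameCycle u w → w ≠ u → w ∈ S := by
  constructor
  · intro h w hw hwne
    obtain ⟨k, hk, hS⟩ := aux_pathImp σ h
    have hp : (σ ^ (k + 1)) u = u := by
      rw [pow_succ, Equiv.Perm.mul_apply]; exact hk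
    obtain ⟨t, _, ht⟩ := hw.exists_pow_eq'
    have hper := aux_periodic σ hp t
    set r := t % (k + 1) with hr
    have hrlt : r < k + 1 := Nat.mod_lt t (Nat.succ_pos k)
    have hwr : (σ ^ r) u = w := by rw [← hper, ht]
    have hr0 : r ≠ 0 := by
      intro h0
      apply hwne
      rw [← hwr, h0, pow_zero, Equiv.Perm.one_apply]
    have hr1 : r - 1 < k := by omega
    have : (σ ^ (r - 1)) (σ u) = w := by
      rw [← Equiv.Perm.mul_apply, ← pow_succ, Nat.sub_add_cancel (Nat.pos_of_ne_zero hr0)]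
      exact hwr
    rw [← this]
    exact hS (r - 1) hr1
  · intro hall
    have hex : ∃ t, 0 < t ∧ (σ ^ t) u = u :=
      ⟨orderOf σ, orderOf_pos σ, by rw [pow_orderOf_eq_one]; rfl⟩
    classical
    set p := Nat.find hex with hpdef
    obtain ⟨hppos, hpfix⟩ := Nat.find_spec hex
    have hstep : ∀ j < p - 1, (σ ^ j) (σ u) ∈ S := by
      intro j hj
      have heq : (σ ^ j) (σ u) = (σ ^ (j + 1)) u := by
        rw [pow_succ, Equiv.Perm.mul_apply]
      rw [heq]
      refine hall _ ⟨((j : ℤ) + 1), by rw [show ((j : ℤ) + 1) = ((j + 1 : ℕ) : ℤ) by push_cast; ring, zpow_natCast]⟩ ?_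
      intro hfix
      exact absurd ⟨Nat.succ_pos j, hfix⟩ (Nat.find_min hex (by omega))
    have hfin : (σ ^ (p - 1)) (σ u) = u := by
      rw [← Equiv.Perm.mul_apply, ← pow_succ, Nat.sub_add_cancel hppos]
      exact hpfix
    have := aux_impPath σ (p - 1) hstep
    rwa [hfin] at this

/-- classification of cycle closers for permutations: for a
non-fixed-point `u`, the digraph whose edges come from the predecessors of `u` in the
FZ order (all of `H` first in increasing order, then `G` in increasing order, then `F`
in decreasing order) contains a directed path from `σ u` to `u` iff `u` is the minimum
of its cycle; in that case `u` is a cycle valley. -/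

theorem statement15 (n : ℕ) (σ : Equiv.Perm (Fin n)) (u : Fin n) (hu : σ u ≠ u) :
    (Relation.ReflTransGen
        (edgeOf σ
          (if σ u < u then {v | σ v = v ∨ (σ v < v ∧ v < u)}
            else {v | σ v ≤ v ∨ (v < σ v ∧ u < v)}))
        (σ u) u ↔ IsCycMin σ u) ∧
    (IsCycMin σ u → IsCval σ u) := by
  have hsc1 : σ.SameCycle u (σ u) := ⟨1, by simp⟩
  have hscinv : σ.SameCycle u (σ.symm u) := ⟨-1, by rw [zpow_neg, zpow_one]; rfl⟩
  constructor
  · -- the iff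
    set C : Finset (Fin n) := Finset.univ.filter (σ.SameCycle u) with hC
    have hCmem : ∀ w, w ∈ C ↔ σ.SameCycle u w := by
      intro w; simp [hC]
    have hne : C.Nonempty := ⟨u, (hCmem u).2 (Equiv.Perm.SameCycle.refl σ u)⟩
    set m := C.min' hne with hm
    have hmC : σ.SameCycle u m := (hCmem m).1 (C.min'_mem hne)
    have hmin : ∀ w, σ.SameCycle u w → m ≤ w := fun w hw => C.min'_le w ((hCmem w).2 hw)
    have hmfix : σ m ≠ m := by
      intro hfix
      apply hu
      obtain ⟨i, hi⟩ := hmC.symm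
      have : m = u := by
        rw [← hi, Equiv.Perm.zpow_apply_eq_self_of_apply_eq_self hfix]
      rw [this] at hfix; exact hfix
    have hmσ : m < σ m :=
      lt_of_le_of_ne (hmin _ (hmC.trans ⟨1, by simp⟩)) (Ne.symm hmfix)
    by_cases hlt : σ u < u
    · rw [if_pos hlt, aux_closeIff]
      constructor
      · intro hall
        exfalso
        have hmu : m ≠ u := by
          intro h
          exact absurd (h ▸ hmin (σ u) hsc1) (not_le.2 hlt)
        rcases hall m hmC hmu with h1 | h2
        · exact hmfix h1
        · exact absurd h2.1 (not_lt.2 hmσ.le)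
      · intro h
        exact absurd (h (σ u) hsc1) (not_le.2 hlt)
    · rw [if_neg hlt, aux_closeIff]
      constructor
      · intro hall j hj
        have hmu : m = u := by
          by_contra hne'
          rcases hall m hmC hne' with h1 | h2
          · exact absurd h1 (not_le.2 hmσ)
          · exact absurd (hmin u (Equiv.Perm.SameCycle.refl σ u)) (not_le.2 h2.2)
        rw [← hmu]
        exact hmin j hj
      · intro hcm w hw hwne
        have huw : u < w := lt_of_le_of_ne (hcm w hw) (Ne.symm hwne)
        by_cases h' : σ w ≤ w
        · exact Or.inl h'
        · exact Or.inr ⟨not_le.1 h', huw⟩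
  · -- cycle min implies cycle valley
    intro h
    refine ⟨lt_of_le_of_ne (h _ hscinv) ?_, lt_of_le_of_ne (h _ hsc1) (Ne.symm hu)⟩
    intro heq
    exact hu (by conv_lhs => rw [heq, Equiv.apply_symm_apply])


end CFPaper

end
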